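/- Let Γ be a chordal graph with a perfect elimination ordering. If C is the edge set of a cycle in Γ, then there exist distinct edges e, e' ∈ C with h(e) = h(e'), and moreover any two distinct edges e, e' with h(e) = h(e') are contained in a cycle of Γ with exactly 3 edges. -/

import Mathlib

open SimpleGraph

section Defs

variable {V : Type*}

/-- The larger endpoint (head) of an edge, with respect to a linear order on vertices. -/
def esup [LinearOrder V] (e : Sym2 V) : V :=
  Sym2.lift ⟨fun a b => a ⊔ b, fun a b => sup_comm a b⟩ e

/-- The smaller endpoint (tail) of an edge. -/
def einf [LinearOrder V] (e : Sym2 V) : V :=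
  Sym2.lift ⟨fun a b => a ⊓ b, fun a b => inf_comm a b⟩ e

/-- The order on edges induced by a linear order on vertices:
`e < e'` iff `h(e) < h(e')`, or `h(e) = h(e')` and `t(e) < t(e')`. -/
def edgeLT [LinearOrder V] (e f : Sym2 V) : Prop :=
  esup e < esup f ∨ (esup e = esup f ∧ einf e < einf f)

/-- The linear order on the vertices is a perfect elimination ordering: every vertex is
simplicial in the induced subgraph on the vertices below it. -/
def IsPEO [LinearOrder V] (G : SimpleGraph V) : Prop :=
  ∀ v u w : V, u < v → w < v → u ≠ w → G.Adj u v → G.Adj w v → G.Adj u w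

/-- A cycle (walk) in a graph has a chord. -/
def SimpleGraph.Walk.HasChord {G : SimpleGraph V} {v : V} (c : G.Walk v v) : Prop :=
  ∃ a b : V, a ∈ c.support ∧ b ∈ c.support ∧ G.Adj a b ∧ s(a, b) ∉ c.edges

/-- A graph is chordal if every cycle with more than three vertices has a chord. -/
def SimpleGraph.IsChordal (G : SimpleGraph V) : Prop :=
  ∀ (v : V) (c : G.Walk v v), c.IsCycle → 3 < c.length → c.HasChord

/-- `S` is the edge set of a cycle of `G`. -/
def IsCycleEdges [DecidableEq V] (G : SimpleGraph V) (S : Finset (Sym2 V)) : Prop :=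
  ∃ (v : V) (c : G.Walk v v), c.IsCycle ∧ c.edges.toFinset = S

/-- `S` is a broken circuit: there is an edge `e` smaller than every element of `S` such that
`S ∪ {e}` is the edge set of a cycle. -/
def IsBrokenCircuit [LinearOrder V] (G : SimpleGraph V) (S : Finset (Sym2 V)) : Prop :=
  ∃ e : Sym2 V, e ∉ S ∧ (∀ f ∈ S, edgeLT e f) ∧ IsCycleEdges G (insert e S)

/-- `S` is an nbc set: a set of edges of `G` no subset of which is a broken circuit. -/
def IsNBC [LinearOrder V] (G : SimpleGraph V) (S : Finset (Sym2 V)) : Prop :=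
  ↑S ⊆ G.edgeSet ∧ ∀ T ⊆ S, ¬IsBrokenCircuit G T

end Defs

/-
At the largest vertex of a cycle, both cycle edges have that vertex as their head. Two edges
`s(u, v)`, `s(w, v)` with common head `v` have tails `u, w < v`, which the perfect elimination
ordering makes adjacent, so the three edges form a triangle.
-/

section

universe u

variable {V : Type u}

section LinearOrder

variable [LinearOrder V]

@[simp]
lemma esup_mk (a b : V) : esup s(a, b) = a ⊔ b := rfl

@[simp]
lemma einf_mk (a b : V) : einf s(a, b) = a ⊓ b := rfl

lemma mk_einf_esup (e : Sym2 V) : s(einf e, esup e) = e := by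
  induction e using Sym2.ind with
  | _ a b =>
    rcases le_total a b with h | h
    · simp [h]
    · simp [h, Sym2.eq_swap]

lemma einf_lt_esup_of_mem_edgeSet {G : SimpleGraph V} {e : Sym2 V} (he : e ∈ G.edgeSet) :
    einf e < esup e := by
  induction e using Sym2.ind with
  | _ a b => simpa [inf_lt_sup] using (G.ne_of_adj he).symm

lemma adj_einf_esup_of_mem_edgeSet {G : SimpleGraph V} {e : Sym2 V} (he : e ∈ G.edgeSet) :
    G.Adj (einf e) (esup e) := by
  rwa [← SimpleGraph.mem_edgeSet, mk_einf_esup]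

lemma IsPEO.adj_einf_einf {G : SimpleGraph V} (hpeo : IsPEO G) {e f : Sym2 V}
    (he : e ∈ G.edgeSet) (hf : f ∈ G.edgeSet) (hef : e ≠ f) (hsup : esup e = esup f) :
    G.Adj (einf e) (einf f) := by
  refine hpeo (esup e) _ _ (einf_lt_esup_of_mem_edgeSet he)
    (hsup ▸ einf_lt_esup_of_mem_edgeSet hf) (fun h ↦ hef ?_)
    (adj_einf_esup_of_mem_edgeSet he) (hsup ▸ adj_einf_esup_of_mem_edgeSet hf)
  rw [← mk_einf_esup e, ← mk_einf_esup f, h, hsup]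

lemma SimpleGraph.Walk.IsCycle.exists_mem_edges_ne_esup_eq {G : SimpleGraph V} {v : V}
    {c : G.Walk v v} (hc : c.IsCycle) :
    ∃ e ∈ c.edges, ∃ f ∈ c.edges, e ≠ f ∧ esup e = esup f := by
  obtain ⟨m, hm, hmax⟩ := c.support.toFinset.exists_max_image id ⟨v, by simp⟩
  rw [List.mem_toFinset] at hm
  obtain ⟨x, y, hxy, hnbr⟩ :=
    Set.ncard_eq_two.mp (hc.ncard_neighborSet_toSubgraph_eq_two hm)
  have hmem : ∀ z ∈ c.toSubgraph.neighborSet m, s(m, z) ∈ c.edges ∧ esup s(m, z) = m := by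
    intro z hz
    have hz : s(m, z) ∈ c.edges := Walk.adj_toSubgraph_iff_mem_edges.mp hz
    exact ⟨hz, by simpa using hmax z (by simpa using c.snd_mem_support_of_mem_edges hz)⟩
  obtain ⟨hx, hxm⟩ := hmem x (by simp [hnbr])
  obtain ⟨hy, hym⟩ := hmem y (by simp [hnbr])
  exact ⟨_, hx, _, hy, by rwa [Ne, Sym2.congr_right], hxm.trans hym.symm⟩

end LinearOrder

lemma isCycleEdges_triangle [DecidableEq V] {G : SimpleGraph V} {u v w : V}
    (huv : G.Adj u v) (hvw : G.Adj v w) (hwu : G.Adj w u) :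
    IsCycleEdges G {s(u, v), s(v, w), s(w, u)} ∧
      ({s(u, v), s(v, w), s(w, u)} : Finset (Sym2 V)).card = 3 := by
  let c : G.Walk u u := .cons huv (.cons hvw (.cons hwu .nil))
  have hc : c.IsCycle := by
    simp [c, Walk.cons_isCycle_iff, huv.ne, hvw.ne, hwu.ne, huv.ne.symm, hwu.ne.symm]
  have hedges : c.edges.toFinset = {s(u, v), s(v, w), s(w, u)} := by simp [c]
  refine ⟨⟨u, c, hc, hedges⟩, ?_⟩
  rw [← hedges, List.toFinset_card_of_nodup hc.edges_nodup, Walk.length_edges]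
  rfl

end

theorem stmt_2_general {V : Type*} [LinearOrder V] (G : SimpleGraph V)
    (hpeo : IsPEO G) :
    (∀ C : Finset (Sym2 V), IsCycleEdges G C →
        ∃ e ∈ C, ∃ f ∈ C, e ≠ f ∧ esup e = esup f) ∧
      (∀ e f : Sym2 V, e ∈ G.edgeSet → f ∈ G.edgeSet → e ≠ f → esup e = esup f →
        ∃ T : Finset (Sym2 V), IsCycleEdges G T ∧ T.card = 3 ∧ e ∈ T ∧ f ∈ T) := by
  refine ⟨?_, fun e f he hf hef hsup ↦ ?_⟩
  · rintro C ⟨v, c, hc, rfl⟩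
    obtain ⟨e, he, f, hf, hef, hsup⟩ := hc.exists_mem_edges_ne_esup_eq
    exact ⟨e, List.mem_toFinset.mpr he, f, List.mem_toFinset.mpr hf, hef, hsup⟩
  · obtain ⟨hT, hcard⟩ := isCycleEdges_triangle (adj_einf_esup_of_mem_edgeSet he)
      (hsup ▸ adj_einf_esup_of_mem_edgeSet hf).symm (hpeo.adj_einf_einf he hf hef hsup).symm
    refine ⟨_, hT, hcard, by simp [mk_einf_esup], ?_⟩
    simp [hsup, Sym2.eq_swap, mk_einf_esup]

/-- In a chordal graph with a perfect elimination ordering: the edge set of any cycle contains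
two distinct edges with the same larger endpoint, and any two distinct edges with the same
larger endpoint are contained in a cycle with exactly 3 edges. -/
theorem stmt_2 {V : Type*} [Fintype V] [LinearOrder V] (G : SimpleGraph V)
    (hchordal : G.IsChordal) (hpeo : IsPEO G) :
    (∀ C : Finset (Sym2 V), IsCycleEdges G C →
        ∃ e ∈ C, ∃ f ∈ C, e ≠ f ∧ esup e = esup f) ∧
      (∀ e f : Sym2 V, e ∈ G.edgeSet → f ∈ G.edgeSet → e ≠ f → esup e = esup f →
        ∃ T : Finset (Sym2 V), IsCycleEdges G T ∧ T.card = 3 ∧ e ∈ T ∧ f ∈ T) :=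
  stmt_2_general G hpeo
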